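/- For every integer m ≥ 2 with m ∉ {3, 6, 9, 12}, the sequence f_m(r) is strictly increasing for 0 ≤ r ≤ ⌊m/3⌋ + 1: f_m(0) < f_m(1) < ⋯ < f_m(⌊m/3⌋+1). -/

import Mathlib

/-!
Since `f_m(r + 1) = (2^r f_m(r) + C(m, r+1)) / 2^(r+1)`, the claim is `∑_{i ≤ r} C(m, i) < C(m, r+1)`
for `3r ≤ m`. While `3k + 2 ≤ m` the ratio `C(m, k+1) / C(m, k) = (m - k) / (k + 1)` is at least `2`,
so by induction each binomial coefficient exceeds the sum of all earlier ones; this settles `3r + 3 ≤ m + 1`.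
In the two boundary cases the ratio drops below `2`, and one peels off the top terms instead:
for `m = 3r + 1` the exact ratios give `2 C(m, r-1) + C(m, r) = C(m, r+1)`, and for `m = 3r`, `r ≥ 6`,
they give `2 C(m, r-3) + C(m, r-2) + C(m, r-1) + C(m, r) ≤ C(m, r+1)`; `m = 15` is checked directly.
-/

open Finset

namespace Nat

theorem two_mul_choose_le_choose_succ {m k : ℕ} (h : 3 * k + 2 ≤ m) :
    2 * m.choose k ≤ m.choose (k + 1) := by
  have hstep := choose_succ_right_eq m k
  refine Nat.le_of_mul_le_mul_right ?_ (succ_pos k)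
  calc 2 * m.choose k * (k + 1) = m.choose k * (2 * k + 2) := by ring
    _ ≤ m.choose k * (m - k) := Nat.mul_le_mul_left _ (by omega)
    _ = m.choose (k + 1) * (k + 1) := hstep.symm

theorem sum_range_choose_lt_choose {m r : ℕ} (h : 3 * r ≤ m + 1) :
    ∑ i ∈ range r, m.choose i < m.choose r := by
  induction r with
  | zero => simp
  | succ r ih =>
    rw [sum_range_succ]
    have hratio := two_mul_choose_le_choose_succ (m := m) (k := r) (by omega)
    have hsum := ih (by omega)
    omega

theorem choose_succ_mul_eq {m k n : ℕ} (h : m = k + n) :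
    m.choose (k + 1) * (k + 1) = m.choose k * n := by
  rw [choose_succ_right_eq, h, Nat.add_sub_cancel_left]

theorem two_mul_choose_add_choose_eq_choose (k : ℕ) :
    2 * (3 * k + 4).choose k + (3 * k + 4).choose (k + 1) = (3 * k + 4).choose (k + 2) := by
  have h₀ : (3 * k + 4).choose (k + 1) * (k + 1) = (3 * k + 4).choose k * (2 * k + 4) :=
    choose_succ_mul_eq (by ring)
  have h₁ : (3 * k + 4).choose (k + 2) * (k + 2) = (3 * k + 4).choose (k + 1) * (2 * k + 3) :=
    choose_succ_mul_eq (k := k + 1) (by ring)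
  refine Nat.eq_of_mul_eq_mul_right (show 0 < (k + 1) * (k + 2) by positivity) ?_
  linear_combination (k + 1) * h₀.symm + (k + 1) * h₁.symm

theorem two_mul_choose_add_choose_add_choose_add_choose_le {k : ℕ} (hk : 3 ≤ k) :
    2 * (3 * k + 9).choose k + (3 * k + 9).choose (k + 1) + (3 * k + 9).choose (k + 2)
      + (3 * k + 9).choose (k + 3) ≤ (3 * k + 9).choose (k + 4) := by
  have h₀ : (3 * k + 9).choose (k + 1) * (k + 1) = (3 * k + 9).choose k * (2 * k + 9) :=
    choose_succ_mul_eq (by ring)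
  have h₁ : (3 * k + 9).choose (k + 2) * (k + 2) = (3 * k + 9).choose (k + 1) * (2 * k + 8) :=
    choose_succ_mul_eq (k := k + 1) (by ring)
  have h₂ : (3 * k + 9).choose (k + 3) * (k + 3) = (3 * k + 9).choose (k + 2) * (2 * k + 7) :=
    choose_succ_mul_eq (k := k + 2) (by ring)
  have h₃ : (3 * k + 9).choose (k + 4) * (k + 4) = (3 * k + 9).choose (k + 3) * (2 * k + 6) :=
    choose_succ_mul_eq (k := k + 3) (by ring)
  zify at h₀ h₁ h₂ h₃ hk ⊢
  refine le_of_mul_le_mul_right (a := ((k : ℤ) + 1) * (k + 2) * (k + 3) * (k + 4)) ?_ (by positivity)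
  -- After clearing the denominators of the four ratios, the gap is `C(3k + 9, k) (k - 3) (3k + 10) (k + 4)`.
  have hgap : 0 ≤ ((3 * k + 9).choose k : ℤ) * ((k - 3) * (3 * k + 10) * (k + 4)) := by
    have : (0 : ℤ) ≤ k - 3 := by linarith
    positivity
  linear_combination hgap + ((k : ℤ) + 4) * (k ^ 2 + 3 * k - 2) * h₀.symm
    + ((k : ℤ) + 1) * (k ^ 2 + 4 * k + 2) * h₁.symm + ((k : ℤ) + 1) * (k + 2) ^ 2 * h₂.symm
    + ((k : ℤ) + 1) * (k + 2) * (k + 3) * h₃.symm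

theorem sum_range_choose_lt_choose_succ {m r : ℕ} (hm : 2 ≤ m) (hr : 3 * r ≤ m)
    (hne : m ∉ ({3, 6, 9, 12} : Set ℕ)) :
    ∑ i ∈ range (r + 1), m.choose i < m.choose (r + 1) := by
  simp only [Set.mem_insert_iff, Set.mem_singleton_iff, not_or] at hne
  obtain hr' | hm' | hm' : 3 * (r + 1) ≤ m + 1 ∨ m = 3 * r + 1 ∨ m = 3 * r := by omega
  · exact sum_range_choose_lt_choose hr'
  · obtain ⟨k, rfl⟩ : ∃ k, r = k + 1 := ⟨r - 1, by omega⟩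
    obtain rfl : m = 3 * k + 4 := by omega
    have hk := sum_range_choose_lt_choose (m := 3 * k + 4) (r := k) (by omega)
    calc ∑ i ∈ range (k + 2), (3 * k + 4).choose i
        = ∑ i ∈ range k, (3 * k + 4).choose i + (3 * k + 4).choose k
          + (3 * k + 4).choose (k + 1) := by simp only [sum_range_succ]
      _ < 2 * (3 * k + 4).choose k + (3 * k + 4).choose (k + 1) := by omega
      _ = (3 * k + 4).choose (k + 2) := two_mul_choose_add_choose_eq_choose k
  · obtain rfl | hr₆ : r = 5 ∨ 6 ≤ r := by omega
    · subst hm'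
      decide
    obtain ⟨k, rfl⟩ : ∃ k, r = k + 3 := ⟨r - 3, by omega⟩
    obtain rfl : m = 3 * k + 9 := by omega
    have hk := sum_range_choose_lt_choose (m := 3 * k + 9) (r := k) (by omega)
    calc ∑ i ∈ range (k + 4), (3 * k + 9).choose i
        = ∑ i ∈ range k, (3 * k + 9).choose i + (3 * k + 9).choose k + (3 * k + 9).choose (k + 1)
          + (3 * k + 9).choose (k + 2) + (3 * k + 9).choose (k + 3) := by simp only [sum_range_succ]
      _ < 2 * (3 * k + 9).choose k + (3 * k + 9).choose (k + 1) + (3 * k + 9).choose (k + 2)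
          + (3 * k + 9).choose (k + 3) := by omega
      _ ≤ (3 * k + 9).choose (k + 4) := two_mul_choose_add_choose_add_choose_add_choose_le (by omega)

end Nat

theorem stmt_9 (m : ℕ) (hm : 2 ≤ m) (hne : m ∉ ({3, 6, 9, 12} : Set ℕ)) :
    ∀ r : ℕ, r < m / 3 + 1 →
      (∑ i ∈ Finset.range (r + 1), (m.choose i : ℝ)) / 2 ^ r
        < (∑ i ∈ Finset.range (r + 2), (m.choose i : ℝ)) / 2 ^ (r + 1) := by
  intro r hr
  have hS : ∑ i ∈ range (r + 1), (m.choose i : ℝ) < m.choose (r + 1) := by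
    exact_mod_cast Nat.sum_range_choose_lt_choose_succ hm (by omega) hne
  have hpow : (0 : ℝ) < 2 ^ r := by positivity
  rw [sum_range_succ _ (r + 1), pow_succ, div_lt_div_iff₀ hpow (by positivity)]
  linarith [mul_lt_mul_of_pos_right hS hpow]
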